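/- arXiv:2004.11234 — 7 statements merged into one kernel-verified Lean document; each statement's English description precedes it below -/
import Mathlib

section
/- Let D_N be a compact subset of ℝ^N and let F : D_N × D_d → D_N be a continuous state map which is a contraction in its first argument with constant 0 < c < 1, i.e. ‖F(x₁,z) − F(x₂,z)‖ ≤ c‖x₁ − x₂‖ for all x₁, x₂ ∈ D_N and z ∈ D_d. Then the associated state system has the echo state property for any input in (D_d)^{ℤ₋}: for every z ∈ (D_d)^{ℤ₋} there exists a unique x ∈ (D_N)^{ℤ₋} with x_t = F(x_{t−1}, z_t) for all t ∈ ℤ₋. Moreover, the resulting state filter U^F : (D_d)^{ℤ₋} → (D_N)^{ℤ₋} is continuous with respect to the product topologies on (D_d)^{ℤ₋} and (D_N)^{ℤ₋}. -/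
/-!
A solution for the input `z` is a fixed point of the shift operator
`x ↦ (n ↦ F (x (n + 1)) (z n))` on state sequences. Because `F` contracts the state by `c` and the
state space has finite diameter `D`, `k` applications of this operator bring any two sequences within
`c ^ k * D` of each other, uniformly in the input. So the iterates starting from a constant sequence
converge coordinatewise to a fixed point, and any two fixed points coincide. Each iterate depends
continuously on the input, and the convergence is uniform in the input, so the limit does as well.
-/

open Filter Function Topology

section StateStep

variable {X Z : Type*}

def stateStep (F : X → Z → X) (z : ℕ → Z) (x : ℕ → X) : ℕ → X :=
  fun n => F (x (n + 1)) (z n)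

variable [MetricSpace X] {F : X → Z → X} {c D : ℝ}

theorem dist_iterate_stateStep_le (hc : 0 ≤ c)
    (hcontr : ∀ (x₁ x₂ : X) (w : Z), dist (F x₁ w) (F x₂ w) ≤ c * dist x₁ x₂)
    (hD : ∀ x₁ x₂ : X, dist x₁ x₂ ≤ D) (z : ℕ → Z) (x y : ℕ → X) (k n : ℕ) :
    dist ((stateStep F z)^[k] x n) ((stateStep F z)^[k] y n) ≤ c ^ k * D := by
  induction k generalizing n with
  | zero => simpa using hD (x n) (y n)
  | succ k ih =>
    simp only [iterate_succ_apply', stateStep]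
    calc _ ≤ c * dist ((stateStep F z)^[k] x (n + 1)) ((stateStep F z)^[k] y (n + 1)) :=
          hcontr _ _ _
      _ ≤ c * (c ^ k * D) := mul_le_mul_of_nonneg_left (ih (n + 1)) hc
      _ = c ^ (k + 1) * D := by ring

theorem eq_of_isFixedPt_stateStep (hc0 : 0 ≤ c) (hc1 : c < 1)
    (hcontr : ∀ (x₁ x₂ : X) (w : Z), dist (F x₁ w) (F x₂ w) ≤ c * dist x₁ x₂)
    (hD : ∀ x₁ x₂ : X, dist x₁ x₂ ≤ D) {z : ℕ → Z} {x y : ℕ → X}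
    (hx : IsFixedPt (stateStep F z) x) (hy : IsFixedPt (stateStep F z) y) : x = y := by
  funext n
  have hlim : Tendsto (fun k : ℕ => c ^ k * D) atTop (𝓝 0) := by
    simpa using (tendsto_pow_atTop_nhds_zero_of_lt_one hc0 hc1).mul_const D
  refine dist_le_zero.mp (ge_of_tendsto' hlim fun k => ?_)
  simpa only [(hx.iterate k).eq, (hy.iterate k).eq] using
    dist_iterate_stateStep_le hc0 hcontr hD z x y k n

theorem tendsto_iterate_stateStep [CompleteSpace X] (hc0 : 0 ≤ c) (hc1 : c < 1)
    (hcontr : ∀ (x₁ x₂ : X) (w : Z), dist (F x₁ w) (F x₂ w) ≤ c * dist x₁ x₂)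
    (hD : ∀ x₁ x₂ : X, dist x₁ x₂ ≤ D) (z : ℕ → Z) (x : ℕ → X) :
    ∃ u, Tendsto (fun k => (stateStep F z)^[k] x) atTop (𝓝 u) := by
  have hcauchy (n : ℕ) : CauchySeq fun k => (stateStep F z)^[k] x n :=
    cauchySeq_of_le_geometric c D hc1 fun k => by
      rw [mul_comm, iterate_succ_apply]
      exact dist_iterate_stateStep_le hc0 hcontr hD z x _ k n
  choose u hu using fun n => cauchySeq_tendsto_of_complete (hcauchy n)
  exact ⟨u, tendsto_pi_nhds.mpr hu⟩

variable [TopologicalSpace Z]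

theorem continuous_stateStep (hF : Continuous (uncurry F)) :
    Continuous fun p : (ℕ → Z) × (ℕ → X) => stateStep F p.1 p.2 :=
  continuous_pi fun n =>
    hF.comp (by fun_prop : Continuous fun p : (ℕ → Z) × (ℕ → X) => (p.2 (n + 1), p.1 n))

theorem continuous_iterate_stateStep (hF : Continuous (uncurry F)) (x : ℕ → X) (k : ℕ) :
    Continuous fun z => (stateStep F z)^[k] x := by
  induction k with
  | zero => exact continuous_const
  | succ k ih =>
    simp only [iterate_succ_apply']
    exact (continuous_stateStep hF).comp (continuous_id.prodMk ih)

theorem exists_continuous_unique_isFixedPt_stateStep [CompleteSpace X] [Nonempty X]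
    (hF : Continuous (uncurry F)) (hc0 : 0 ≤ c) (hc1 : c < 1)
    (hcontr : ∀ (x₁ x₂ : X) (w : Z), dist (F x₁ w) (F x₂ w) ≤ c * dist x₁ x₂)
    (hD : ∀ x₁ x₂ : X, dist x₁ x₂ ≤ D) :
    ∃ U : (ℕ → Z) → ℕ → X, Continuous U ∧
      ∀ z, IsFixedPt (stateStep F z) (U z) ∧ ∀ x, IsFixedPt (stateStep F z) x → x = U z := by
  obtain ⟨a⟩ := ‹Nonempty X›
  choose U hU using tendsto_iterate_stateStep hc0 hc1 hcontr hD (x := fun _ => a)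
  have hfix (z : ℕ → Z) : IsFixedPt (stateStep F z) (U z) :=
    isFixedPt_of_tendsto_iterate (hU z)
      ((continuous_stateStep hF).comp (Continuous.prodMk_right z)).continuousAt
  have hunif (n : ℕ) : TendstoUniformly (fun k z => (stateStep F z)^[k] (fun _ => a) n)
      (fun z => U z n) atTop := by
    have hlim : Tendsto (fun k : ℕ => c ^ k * D) atTop (𝓝 0) := by
      simpa using (tendsto_pow_atTop_nhds_zero_of_lt_one hc0 hc1).mul_const D
    refine Metric.tendstoUniformly_iff.mpr fun ε hε => ?_
    filter_upwards [hlim.eventually (gt_mem_nhds hε)] with k hk z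
    calc dist (U z n) ((stateStep F z)^[k] (fun _ => a) n)
        = dist ((stateStep F z)^[k] (U z) n) ((stateStep F z)^[k] (fun _ => a) n) := by
          rw [((hfix z).iterate k).eq]
      _ ≤ c ^ k * D := dist_iterate_stateStep_le hc0 hcontr hD z _ _ k n
      _ < ε := hk
  refine ⟨U, continuous_pi fun n => ?_, fun z => ⟨hfix z, fun x hx =>
    eq_of_isFixedPt_stateStep hc0 hc1 hcontr hD hx (hfix z)⟩⟩
  exact (hunif n).continuous (Frequently.of_forall fun k =>
    continuous_apply n |>.comp (continuous_iterate_stateStep hF _ k))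

end StateStep

theorem stmt_0 {N d : ℕ}
    (DN : Set (EuclideanSpace ℝ (Fin N))) (Dd : Set (EuclideanSpace ℝ (Fin d)))
    (hDNcompact : IsCompact DN) (hDNne : DN.Nonempty)
    (F : DN → Dd → DN)
    (hFcont : Continuous fun p : DN × Dd => F p.1 p.2)
    (c : ℝ) (hc0 : 0 < c) (hc1 : c < 1)
    (hcontr : ∀ (x₁ x₂ : DN) (z : Dd),
      ‖((F x₁ z : EuclideanSpace ℝ (Fin N)) - (F x₂ z : EuclideanSpace ℝ (Fin N)))‖ ≤
        c * ‖((x₁ : EuclideanSpace ℝ (Fin N)) - (x₂ : EuclideanSpace ℝ (Fin N)))‖) :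
    ∃ U : (ℕ → Dd) → (ℕ → DN),
      Continuous U ∧
      ∀ z : ℕ → Dd,
        (∀ n, U z n = F (U z (n + 1)) (z n)) ∧
        (∀ x : ℕ → DN, (∀ n, x n = F (x (n + 1)) (z n)) → x = U z) := by
  have : CompactSpace DN := isCompact_iff_compactSpace.mp hDNcompact
  have : Nonempty DN := hDNne.to_subtype
  have hdist (x₁ x₂ : DN) (w : Dd) : dist (F x₁ w) (F x₂ w) ≤ c * dist x₁ x₂ := by
    simpa only [Subtype.dist_eq, dist_eq_norm] using hcontr x₁ x₂ w
  have hdiam (x₁ x₂ : DN) : dist x₁ x₂ ≤ Metric.diam DN :=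
    Metric.dist_le_diam_of_mem hDNcompact.isBounded x₁.2 x₂.2
  obtain ⟨U, hUcont, hU⟩ :=
    exists_continuous_unique_isFixedPt_stateStep hFcont hc0.le hc1 hdist hdiam
  refine ⟨U, hUcont, fun z => ⟨fun n => congrFun (hU z).1.symm n, fun x hx => ?_⟩⟩
  exact (hU z).2 x (funext hx).symm
end

section
/- Let (F₁, h₁) and (F₂, h₂) be state-space systems with F_i : D_{N_i} × D_d → D_{N_i} and readouts h_i : D_{N_i} → ℝ^m, and let f : D_{N₁} → D_{N₂} be a system morphism between them (f is system equivariant and readout invariant). Suppose the system (F₂, h₂) has the echo state property and that the state system determined by F₁ has at least one solution for every input z ∈ (D_d)^{ℤ₋}. Then (F₁, h₁) has the echo state property and the induced state-space filters coincide: U^{F₁}_{h₁}(z) = U^{F₂}_{h₂}(z) for all z ∈ (D_d)^{ℤ₋}. -/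
/-! A system morphism pushes every solution of the first system forward to a solution of the
second one with the same output. Since the second system has a unique output for each input,
all outputs of the first system equal that output, which gives both uniqueness (hence the echo
state property, existence being assumed) and the equality of the filters. -/

namespace StateSpace

variable {X X₁ X₂ U Y : Type*}

/-- The time index `n : ℕ` stands for `-n ∈ ℤ₋`, so `x (n + 1)` is the previous state. -/
def IsSolution (F : X → U → X) (z : ℕ → U) (x : ℕ → X) : Prop :=
  ∀ n, x n = F (x (n + 1)) (z n)

def HasESP (F : X → U → X) (h : X → Y) : Prop :=
  ∀ z : ℕ → U, ∃! y : ℕ → Y, ∃ x : ℕ → X, IsSolution F z x ∧ y = fun n => h (x n)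

theorem IsSolution.map {F₁ : X₁ → U → X₁} {F₂ : X₂ → U → X₂} {f : X₁ → X₂}
    (hequiv : ∀ x u, f (F₁ x u) = F₂ (f x) u) {z : ℕ → U} {x : ℕ → X₁}
    (hx : IsSolution F₁ z x) : IsSolution F₂ z fun n => f (x n) :=
  fun n => (congrArg f (hx n)).trans (hequiv _ _)

theorem HasESP.output_eq {F : X → U → X} {h : X → Y} (hF : HasESP F h) {z : ℕ → U}
    {x x' : ℕ → X} (hx : IsSolution F z x) (hx' : IsSolution F z x') :
    (fun n => h (x n)) = fun n => h (x' n) :=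
  (hF z).unique ⟨x, hx, rfl⟩ ⟨x', hx', rfl⟩

section Morphism

variable {F₁ : X₁ → U → X₁} {F₂ : X₂ → U → X₂} {h₁ : X₁ → Y} {h₂ : X₂ → Y} {f : X₁ → X₂}
  (hequiv : ∀ x u, f (F₁ x u) = F₂ (f x) u) (hread : ∀ x, h₁ x = h₂ (f x))
  (hESP₂ : HasESP F₂ h₂)
include hequiv hread hESP₂

theorem output_eq_of_morphism {z : ℕ → U} {x₁ : ℕ → X₁} {x₂ : ℕ → X₂}
    (hx₁ : IsSolution F₁ z x₁) (hx₂ : IsSolution F₂ z x₂) :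
    (fun n => h₁ (x₁ n)) = fun n => h₂ (x₂ n) :=
  calc (fun n => h₁ (x₁ n)) = fun n => h₂ (f (x₁ n)) := funext fun n => hread (x₁ n)
    _ = fun n => h₂ (x₂ n) := hESP₂.output_eq (hx₁.map hequiv) hx₂

theorem HasESP.of_morphism (hsol₁ : ∀ z, ∃ x, IsSolution F₁ z x) : HasESP F₁ h₁ := by
  intro z
  obtain ⟨x, hx⟩ := hsol₁ z
  refine ⟨_, ⟨x, hx, rfl⟩, ?_⟩
  rintro _ ⟨x', hx', rfl⟩
  have hfx := hx.map hequiv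
  exact (output_eq_of_morphism hequiv hread hESP₂ hx' hfx).trans
    (output_eq_of_morphism hequiv hread hESP₂ hx hfx).symm

end Morphism

end StateSpace

open StateSpace in
theorem stmt_2 {N₁ N₂ d m : ℕ}
    (DN₁ : Set (EuclideanSpace ℝ (Fin N₁))) (DN₂ : Set (EuclideanSpace ℝ (Fin N₂)))
    (Dd : Set (EuclideanSpace ℝ (Fin d)))
    (F₁ : DN₁ → Dd → DN₁) (F₂ : DN₂ → Dd → DN₂)
    (h₁ : DN₁ → EuclideanSpace ℝ (Fin m)) (h₂ : DN₂ → EuclideanSpace ℝ (Fin m))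
    (f : DN₁ → DN₂)
    (hequiv : ∀ (x : DN₁) (z : Dd), f (F₁ x z) = F₂ (f x) z)
    (hread : ∀ x : DN₁, h₁ x = h₂ (f x))
    (hESP₂ : ∀ z : ℕ → Dd, ∃! y : ℕ → EuclideanSpace ℝ (Fin m),
      ∃ x : ℕ → DN₂, (∀ n, x n = F₂ (x (n + 1)) (z n)) ∧ y = fun n => h₂ (x n))
    (hsol₁ : ∀ z : ℕ → Dd, ∃ x : ℕ → DN₁, ∀ n, x n = F₁ (x (n + 1)) (z n)) :
    (∀ z : ℕ → Dd, ∃! y : ℕ → EuclideanSpace ℝ (Fin m),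
      ∃ x : ℕ → DN₁, (∀ n, x n = F₁ (x (n + 1)) (z n)) ∧ y = fun n => h₁ (x n)) ∧
    (∀ (z : ℕ → Dd) (x₁ : ℕ → DN₁) (x₂ : ℕ → DN₂),
      (∀ n, x₁ n = F₁ (x₁ (n + 1)) (z n)) → (∀ n, x₂ n = F₂ (x₂ (n + 1)) (z n)) →
      ∀ n, h₁ (x₁ n) = h₂ (x₂ n)) :=
  ⟨HasESP.of_morphism hequiv hread hESP₂ hsol₁, fun _ _ _ hx₁ hx₂ n =>
    congrFun (output_eq_of_morphism hequiv hread hESP₂ hx₁ hx₂) n⟩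
end

section
/- Let F : D_N × D_d → D_N be a state map that has the echo state property and whose state filter U^F : (D_d)^{ℤ₋} → (D_N)^{ℤ₋} is continuous with respect to the product topologies. If the input process Z : Ω → (D_d)^{ℤ₋} is strictly stationary, then so is the state process X := U^F(Z) : Ω → (D_N)^{ℤ₋}, and the joint processes (T_{−τ}(X), Z) and (X, T_{−τ}(Z)) are strictly stationary for every τ ∈ ℤ₋. -/
/-!
The solution of the state equation for a delayed input is the delayed solution, because the delayed
solution solves the state equation for the delayed input and solutions are unique. Hence each
process in the statement, delayed by `k`, is the image of `T_{-k}(Z)` under the same measurable map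
that produces it from `Z`, and `T_{-k}(Z)` has the law of `Z`.
-/

open MeasureTheory ProbabilityTheory

lemma echoStateFilter_shift {α β : Type*} {F : β → α → β} {U : (ℕ → α) → ℕ → β}
    (hUsol : ∀ z : ℕ → α, ∀ n, U z n = F (U z (n + 1)) (z n))
    (hESP : ∀ (z : ℕ → α) (x : ℕ → β), (∀ n, x n = F (x (n + 1)) (z n)) → x = U z)
    (k : ℕ) (z : ℕ → α) :
    U (fun n => z (n + k)) = fun n => U z (n + k) := by
  refine (hESP _ _ fun n => ?_).symm
  rw [hUsol z (n + k), Nat.add_right_comm]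

lemma identDistrib_shift_of_map_eq {Ω α : Type*} [MeasurableSpace Ω] [MeasurableSpace α]
    {μ : Measure Ω} {Z : Ω → ℕ → α} (hZmeas : Measurable Z)
    {k : ℕ} (hZk : Measure.map (fun ω => fun n => Z ω (n + k)) μ = Measure.map Z μ) :
    IdentDistrib (fun ω => fun n => Z ω (n + k)) Z μ μ where
  aemeasurable_fst := by fun_prop
  aemeasurable_snd := hZmeas.aemeasurable
  map_eq := hZk

theorem stmt_3_general {N d : ℕ}
    (DN : Set (EuclideanSpace ℝ (Fin N))) (Dd : Set (EuclideanSpace ℝ (Fin d)))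
    (F : DN → Dd → DN)
    (U : (ℕ → Dd) → (ℕ → DN))
    (hUsol : ∀ z : ℕ → Dd, ∀ n, U z n = F (U z (n + 1)) (z n))
    (hESP : ∀ (z : ℕ → Dd) (x : ℕ → DN), (∀ n, x n = F (x (n + 1)) (z n)) → x = U z)
    (hUcont : Continuous U)
    {Ω : Type*} [MeasurableSpace Ω] (μ : Measure Ω)
    (Z : Ω → ℕ → Dd) (hZmeas : Measurable Z)
    (hZstat : ∀ k : ℕ,
      Measure.map (fun ω => fun n => Z ω (n + k)) μ = Measure.map Z μ) :
    -- the state process X := U ∘ Z is strictly stationary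
    (∀ k : ℕ,
      Measure.map (fun ω => fun n => U (Z ω) (n + k)) μ =
        Measure.map (fun ω => U (Z ω)) μ) ∧
    -- the joint process (T_{-τ}(X), Z) is strictly stationary for every lag τ = -t₀
    (∀ t₀ k : ℕ,
      Measure.map (fun ω => (fun n => U (Z ω) (n + t₀ + k), fun n => Z ω (n + k))) μ =
        Measure.map (fun ω => (fun n => U (Z ω) (n + t₀), Z ω)) μ) ∧
    -- the joint process (X, T_{-τ}(Z)) is strictly stationary for every lag τ = -t₀
    (∀ t₀ k : ℕ,
      Measure.map (fun ω => (fun n => U (Z ω) (n + k), fun n => Z ω (n + t₀ + k))) μ =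
        Measure.map (fun ω => (U (Z ω), fun n => Z ω (n + t₀))) μ) := by
  have hUmeas : Measurable U := hUcont.measurable
  have hshift := echoStateFilter_shift hUsol hESP
  have hZshift k := identDistrib_shift_of_map_eq hZmeas (hZstat k)
  refine ⟨fun k => ?_, fun t₀ k => ?_, fun t₀ k => ?_⟩
  · simpa only [Function.comp_def, hshift] using ((hZshift k).comp hUmeas).map_eq
  · have hG : Measurable fun z : ℕ → Dd => (fun n => U z (n + t₀), z) := by fun_prop
    simpa only [Function.comp_def, hshift, Nat.add_right_comm]
      using ((hZshift k).comp hG).map_eq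
  · have hH : Measurable fun z : ℕ → Dd => (U z, fun n => z (n + t₀)) := by fun_prop
    simpa only [Function.comp_def, hshift, Nat.add_right_comm]
      using ((hZshift k).comp hH).map_eq

theorem stmt_3 {N d : ℕ}
    (DN : Set (EuclideanSpace ℝ (Fin N))) (Dd : Set (EuclideanSpace ℝ (Fin d)))
    (F : DN → Dd → DN)
    (U : (ℕ → Dd) → (ℕ → DN))
    (hUsol : ∀ z : ℕ → Dd, ∀ n, U z n = F (U z (n + 1)) (z n))
    (hESP : ∀ (z : ℕ → Dd) (x : ℕ → DN), (∀ n, x n = F (x (n + 1)) (z n)) → x = U z)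
    (hUcont : Continuous U)
    {Ω : Type*} [MeasurableSpace Ω] (μ : Measure Ω) [IsProbabilityMeasure μ]
    (Z : Ω → ℕ → Dd) (hZmeas : Measurable Z)
    (hZstat : ∀ k : ℕ,
      Measure.map (fun ω => fun n => Z ω (n + k)) μ = Measure.map Z μ) :
    -- the state process X := U ∘ Z is strictly stationary
    (∀ k : ℕ,
      Measure.map (fun ω => fun n => U (Z ω) (n + k)) μ =
        Measure.map (fun ω => U (Z ω)) μ) ∧
    -- the joint process (T_{-τ}(X), Z) is strictly stationary for every lag τ = -t₀
    (∀ t₀ k : ℕ,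
      Measure.map (fun ω => (fun n => U (Z ω) (n + t₀ + k), fun n => Z ω (n + k))) μ =
        Measure.map (fun ω => (fun n => U (Z ω) (n + t₀), Z ω)) μ) ∧
    -- the joint process (X, T_{-τ}(Z)) is strictly stationary for every lag τ = -t₀
    (∀ t₀ k : ℕ,
      Measure.map (fun ω => (fun n => U (Z ω) (n + k), fun n => Z ω (n + t₀ + k))) μ =
        Measure.map (fun ω => (U (Z ω), fun n => Z ω (n + t₀))) μ) :=
  stmt_3_general DN Dd F U hUsol hESP hUcont μ Z hZmeas hZstat
end

section
/- Let Z be a variance-stationary real-valued input process and F a state map with the echo state property on the paths of Z such that the state process X_t := U^F(Z)_t is covariance stationary and the joint processes (T_{−τ}X, Z) and (X, T_{−τ}Z) are covariance stationary for every τ ∈ ℤ₋. If the covariance matrix Γ_X := Cov(X_t, X_t) is invertible, then for every τ ∈ ℤ₋ the lagged capacities are given explicitly by MC_τ = Cov(Z_{t+τ}, X_t) Γ_X^{−1} Cov(X_t, Z_{t+τ}) / Var(Z_t) and FC_τ = Cov(Z_t, X_{t+τ}) Γ_X^{−1} Cov(X_{t+τ}, Z_t) / Var(Z_t). -/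
open Matrix MeasureTheory

/-- Expectation of a real random variable. -/
noncomputable def expv {Ω : Type*} [MeasurableSpace Ω] (μ : Measure Ω) (f : Ω → ℝ) : ℝ :=
  ∫ ω, f ω ∂μ

/-- Covariance of two real random variables. -/
noncomputable def covv {Ω : Type*} [MeasurableSpace Ω] (μ : Measure Ω) (f g : Ω → ℝ) : ℝ :=
  ∫ ω, (f ω - expv μ f) * (g ω - expv μ g) ∂μ

/-- The τ-lag memory capacity (τ = -k ∈ ℤ₋).  ℤ₋ is encoded by ℕ via n ↦ -n, so
the state at time 0 has index 0 and the input at time τ = -k has index k: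
MC_τ = 1 - (1/Var(Z_t)) min_{W,a} E[(Z_{t+τ} - Wᵀ X_t - a)²]. -/
noncomputable def memCap {Ω : Type*} [MeasurableSpace Ω] (μ : Measure Ω) {N : ℕ}
    (Z : ℕ → Ω → ℝ) (X : ℕ → Ω → (Fin N → ℝ)) (k : ℕ) : ℝ :=
  1 - (1 / covv μ (Z 0) (Z 0)) *
    ⨅ p : (Fin N → ℝ) × ℝ, ∫ ω, (Z k ω - p.1 ⬝ᵥ X 0 ω - p.2) ^ 2 ∂μ

/-- The τ-lag forecasting capacity (τ = -k ∈ ℤ⁻, k ≥ 1).  By time invariance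
U^F(T_{-τ}Z)_t = X_{t+τ}, which in the ℕ-encoding is the state of index k:
FC_τ = 1 - (1/Var(Z_t)) min_{W,a} E[(Z_t - Wᵀ U^F(T_{-τ}Z)_t - a)²]. -/
noncomputable def foreCap {Ω : Type*} [MeasurableSpace Ω] (μ : Measure Ω) {N : ℕ}
    (Z : ℕ → Ω → ℝ) (X : ℕ → Ω → (Fin N → ℝ)) (k : ℕ) : ℝ :=
  1 - (1 / covv μ (Z 0) (Z 0)) *
    ⨅ p : (Fin N → ℝ) × ℝ, ∫ ω, (Z 0 ω - p.1 ⬝ᵥ X k ω - p.2) ^ 2 ∂μ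

/-
Both capacities have the form 1 - (minimal mean-square error)/Var Z of an affine regression of a
square-integrable scalar Y on a square-integrable vector X. The mean-square error of
(W, a) is Var(Y - W⬝X) plus the square of the mean residual, which the intercept a removes, and
completing the square with c = Cov(X, Y) gives
Var(Y - W⬝X) = Var Y - cᵀΓ⁻¹c + (W - Γ⁻¹c)ᵀ Γ (W - Γ⁻¹c).
As a covariance matrix Γ is positive semidefinite, so the minimum Var Y - cᵀΓ⁻¹c is attained at
W = Γ⁻¹c.
-/

open ProbabilityTheory

lemma covv_eq_covariance {Ω : Type*} [MeasurableSpace Ω] (μ : Measure Ω) (f g : Ω → ℝ) :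
    covv μ f g = cov[f, g; μ] :=
  rfl

lemma integral_sq_sub_const {Ω : Type*} [MeasurableSpace Ω] {μ : Measure Ω}
    [IsProbabilityMeasure μ] {V : Ω → ℝ} (hV : MemLp V 2 μ) (a : ℝ) :
    ∫ ω, (V ω - a) ^ 2 ∂μ = cov[V, V; μ] + (μ[V] - a) ^ 2 := by
  have hVa : MemLp (fun ω => V ω - a) 2 μ := hV.sub (memLp_const a)
  have hint := hV.integrable one_le_two
  have hmean : μ[fun ω => V ω - a] = μ[V] - a := by
    rw [integral_sub hint (integrable_const a), integral_const, probReal_univ, one_smul]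
  have := covariance_eq_sub hVa hVa
  rw [covariance_sub_const_left hint, covariance_sub_const_right hint, hmean] at this
  rw [this]
  simp only [Pi.mul_apply, sq]
  ring

theorem Matrix.IsSymm.dotProduct_mulVec_sub_two_mul_dotProduct {ι R : Type*} [Fintype ι]
    [DecidableEq ι] [CommRing R] {A : Matrix ι ι R} (hA : A.IsSymm) (hdet : IsUnit A.det)
    (v c : ι → R) :
    v ⬝ᵥ A *ᵥ v - 2 * (v ⬝ᵥ c) =
      (v - A⁻¹ *ᵥ c) ⬝ᵥ A *ᵥ (v - A⁻¹ *ᵥ c) - c ⬝ᵥ A⁻¹ *ᵥ c := by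
  set u := A⁻¹ *ᵥ c
  have hAu : A *ᵥ u = c := by
    rw [mulVec_mulVec, mul_nonsing_inv A hdet, one_mulVec]
  have huA : u ⬝ᵥ A *ᵥ v = v ⬝ᵥ c := by
    rw [dotProduct_mulVec, ← hA.eq, vecMul_transpose, hAu, dotProduct_comm]
  rw [mulVec_sub, dotProduct_sub, sub_dotProduct, sub_dotProduct, huA, hAu, dotProduct_comm u c]
  ring

section Regression

variable {Ω ι : Type*} [MeasurableSpace Ω] {μ : Measure Ω}

noncomputable def covMatrix (μ : Measure Ω) (X : Ω → ι → ℝ) : Matrix ι ι ℝ :=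
  Matrix.of fun i j => cov[fun ω => X ω i, fun ω => X ω j; μ]

noncomputable def crossCov (μ : Measure Ω) (X : Ω → ι → ℝ) (Y : Ω → ℝ) : ι → ℝ :=
  fun i => cov[fun ω => X ω i, Y; μ]

lemma covMatrix_isSymm (X : Ω → ι → ℝ) : (covMatrix μ X).IsSymm := by
  ext i j
  exact covariance_comm _ _

variable [Fintype ι]

lemma memLp_dotProduct (W : ι → ℝ) {X : Ω → ι → ℝ} (hX : ∀ i, MemLp (fun ω => X ω i) 2 μ) :
    MemLp (fun ω => W ⬝ᵥ X ω) 2 μ :=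
  memLp_finsetSum Finset.univ fun i _ => (hX i).const_mul (W i)

variable [IsFiniteMeasure μ] {X : Ω → ι → ℝ}

lemma covariance_dotProduct_left (W : ι → ℝ) (hX : ∀ i, MemLp (fun ω => X ω i) 2 μ)
    {Y : Ω → ℝ} (hY : MemLp Y 2 μ) :
    cov[fun ω => W ⬝ᵥ X ω, Y; μ] = W ⬝ᵥ crossCov μ X Y := by
  simp only [dotProduct, crossCov]
  rw [covariance_fun_sum_left (X := fun i ω => W i * X ω i)
    (fun i => (hX i).const_mul (W i)) hY]
  simp only [covariance_const_mul_left]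

lemma covariance_dotProduct_dotProduct (V W : ι → ℝ) (hX : ∀ i, MemLp (fun ω => X ω i) 2 μ) :
    cov[fun ω => V ⬝ᵥ X ω, fun ω => W ⬝ᵥ X ω; μ] = V ⬝ᵥ covMatrix μ X *ᵥ W := by
  rw [covariance_dotProduct_left V hX (memLp_dotProduct W hX)]
  congr 1
  ext i
  rw [crossCov, covariance_comm, covariance_dotProduct_left W hX (hX i), dotProduct_comm]
  simp only [crossCov, covMatrix, mulVec, dotProduct, of_apply, covariance_comm]

lemma covMatrix_posSemidef (hX : ∀ i, MemLp (fun ω => X ω i) 2 μ) :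
    (covMatrix μ X).PosSemidef := by
  refine .of_dotProduct_mulVec_nonneg (covMatrix_isSymm X) fun W => ?_
  rw [star_trivial, ← covariance_dotProduct_dotProduct W W hX]
  exact integral_nonneg fun ω => mul_self_nonneg _

lemma covariance_sub_dotProduct_self (W : ι → ℝ) {Y : Ω → ℝ} (hY : MemLp Y 2 μ)
    (hX : ∀ i, MemLp (fun ω => X ω i) 2 μ) :
    cov[fun ω => Y ω - W ⬝ᵥ X ω, fun ω => Y ω - W ⬝ᵥ X ω; μ] =
      cov[Y, Y; μ] - 2 * (W ⬝ᵥ crossCov μ X Y) + W ⬝ᵥ covMatrix μ X *ᵥ W := by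
  have hW := memLp_dotProduct W hX
  rw [covariance_fun_sub_fun_sub hY hW hY hW, covariance_comm Y (fun ω => W ⬝ᵥ X ω),
    covariance_dotProduct_left W hX hY, covariance_dotProduct_dotProduct W W hX]
  ring

end Regression

theorem iInf_integral_sq_sub_dotProduct_sub {Ω ι : Type*} [MeasurableSpace Ω] {μ : Measure Ω}
    [IsProbabilityMeasure μ] [Fintype ι] [DecidableEq ι] {Y : Ω → ℝ} {X : Ω → ι → ℝ}
    (hY : MemLp Y 2 μ) (hX : ∀ i, MemLp (fun ω => X ω i) 2 μ)
    (hdet : IsUnit (covMatrix μ X).det) :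
    ⨅ p : (ι → ℝ) × ℝ, ∫ ω, (Y ω - p.1 ⬝ᵥ X ω - p.2) ^ 2 ∂μ =
      cov[Y, Y; μ] - crossCov μ X Y ⬝ᵥ (covMatrix μ X)⁻¹ *ᵥ crossCov μ X Y := by
  set Γ := covMatrix μ X
  set c := crossCov μ X Y
  set m := cov[Y, Y; μ] - c ⬝ᵥ Γ⁻¹ *ᵥ c
  set W₀ := Γ⁻¹ *ᵥ c
  have hresidual : ∀ W, cov[fun ω => Y ω - W ⬝ᵥ X ω, fun ω => Y ω - W ⬝ᵥ X ω; μ] =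
      m + (W - W₀) ⬝ᵥ Γ *ᵥ (W - W₀) := fun W => by
    rw [covariance_sub_dotProduct_self W hY hX]
    linarith [(covMatrix_isSymm X).dotProduct_mulVec_sub_two_mul_dotProduct hdet W c]
  have hobjective : ∀ p : (ι → ℝ) × ℝ, ∫ ω, (Y ω - p.1 ⬝ᵥ X ω - p.2) ^ 2 ∂μ =
      m + (p.1 - W₀) ⬝ᵥ Γ *ᵥ (p.1 - W₀) + (μ[fun ω => Y ω - p.1 ⬝ᵥ X ω] - p.2) ^ 2 :=
    fun p => by
      rw [← hresidual]
      exact integral_sq_sub_const (hY.sub (memLp_dotProduct p.1 hX)) p.2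
  have hlower : ∀ p : (ι → ℝ) × ℝ, m ≤ ∫ ω, (Y ω - p.1 ⬝ᵥ X ω - p.2) ^ 2 ∂μ := fun p => by
    have hquad := (covMatrix_posSemidef hX).dotProduct_mulVec_nonneg (p.1 - W₀)
    rw [star_trivial] at hquad
    rw [hobjective]
    nlinarith
  have hattained : ∫ ω, (Y ω - W₀ ⬝ᵥ X ω - μ[fun ω => Y ω - W₀ ⬝ᵥ X ω]) ^ 2 ∂μ = m := by
    rw [hobjective (W₀, _)]
    simp
  exact le_antisymm ((ciInf_le ⟨m, Set.forall_mem_range.2 hlower⟩ (W₀, _)).trans_eq hattained)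
    (le_ciInf hlower)

lemma one_sub_div_covv_mul_iInf_eq {Ω ι : Type*} [MeasurableSpace Ω] {μ : Measure Ω}
    [IsProbabilityMeasure μ] [Fintype ι] [DecidableEq ι] {Y : Ω → ℝ} {X : Ω → ι → ℝ}
    {Γ : Matrix ι ι ℝ} {V : ℝ} (hY : MemLp Y 2 μ) (hX : ∀ i, MemLp (fun ω => X ω i) 2 μ)
    (hΓ : ∀ i j, covv μ (fun ω => X ω i) (fun ω => X ω j) = Γ i j) (hdet : IsUnit Γ.det)
    (hYV : covv μ Y Y = V) (hV : V ≠ 0) :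
    1 - (1 / V) * ⨅ p : (ι → ℝ) × ℝ, ∫ ω, (Y ω - p.1 ⬝ᵥ X ω - p.2) ^ 2 ∂μ =
      (fun i => covv μ Y (fun ω => X ω i)) ⬝ᵥ (Γ⁻¹ *ᵥ fun i => covv μ (fun ω => X ω i) Y) / V := by
  simp only [covv_eq_covariance] at hΓ hYV ⊢
  have hΓ_eq : Γ = covMatrix μ X := Matrix.ext fun i j => (hΓ i j).symm
  have hcross : (fun i => cov[fun ω => X ω i, Y; μ]) = crossCov μ X Y := rfl
  have hcross' : (fun i => cov[Y, fun ω => X ω i; μ]) = crossCov μ X Y :=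
    funext fun i => covariance_comm _ _
  subst hΓ_eq hYV
  rw [iInf_integral_sq_sub_dotProduct_sub hY hX hdet, hcross, hcross']
  field_simp
  ring

theorem stmt_5_general {N : ℕ}
    {Ω : Type*} [MeasurableSpace Ω] (μ : Measure Ω) [IsProbabilityMeasure μ]
    (Z : ℕ → Ω → ℝ) (X : ℕ → Ω → (Fin N → ℝ))
    -- square integrability
    (hZ2 : ∀ t, MemLp (Z t) 2 μ) (hX2 : ∀ t i, MemLp (fun ω => X t ω i) 2 μ)
    -- Z is variance stationary (with positive variance)
    (hZvar : ∀ t, covv μ (Z t) (Z t) = covv μ (Z 0) (Z 0))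
    (hvarpos : 0 < covv μ (Z 0) (Z 0))
    -- X is covariance stationary with covariance matrix Γ_X = Γ
    (Γ : Matrix (Fin N) (Fin N) ℝ)
    (hΓ : ∀ t i j, covv μ (fun ω => X t ω i) (fun ω => X t ω j) = Γ i j)
    -- Γ_X is invertible
    (hΓinv : IsUnit Γ.det) :
    ∀ k : ℕ,
      memCap μ Z X k =
        (fun i => covv μ (Z k) (fun ω => X 0 ω i)) ⬝ᵥ
            (Γ⁻¹ *ᵥ fun i => covv μ (fun ω => X 0 ω i) (Z k)) /
          covv μ (Z 0) (Z 0) ∧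
      foreCap μ Z X (k + 1) =
        (fun i => covv μ (Z 0) (fun ω => X (k + 1) ω i)) ⬝ᵥ
            (Γ⁻¹ *ᵥ fun i => covv μ (fun ω => X (k + 1) ω i) (Z 0)) /
          covv μ (Z 0) (Z 0) := fun k =>
  ⟨one_sub_div_covv_mul_iInf_eq (hZ2 k) (hX2 0) (hΓ 0) hΓinv (hZvar k) hvarpos.ne',
    one_sub_div_covv_mul_iInf_eq (hZ2 0) (hX2 (k + 1)) (hΓ (k + 1)) hΓinv rfl hvarpos.ne'⟩

theorem stmt_5 {N : ℕ} (D : Set ℝ) (DN : Set (Fin N → ℝ))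
    (F : (Fin N → ℝ) → ℝ → (Fin N → ℝ))
    (hF : ∀ x ∈ DN, ∀ z ∈ D, F x z ∈ DN)
    -- F has the echo state property on inputs with values in D
    (hESP : ∀ z : ℕ → ℝ, (∀ n, z n ∈ D) →
      ∃! x : ℕ → (Fin N → ℝ), (∀ n, x n ∈ DN) ∧ ∀ n, x n = F (x (n + 1)) (z n))
    {Ω : Type*} [MeasurableSpace Ω] (μ : Measure Ω) [IsProbabilityMeasure μ]
    (Z : ℕ → Ω → ℝ) (X : ℕ → Ω → (Fin N → ℝ))
    (hZD : ∀ t ω, Z t ω ∈ D) (hXD : ∀ t ω, X t ω ∈ DN)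
    -- X = U^F(Z) is the state process associated to F and Z
    (hXsol : ∀ t ω, X t ω = F (X (t + 1) ω) (Z t ω))
    -- square integrability
    (hZ2 : ∀ t, MemLp (Z t) 2 μ) (hX2 : ∀ t i, MemLp (fun ω => X t ω i) 2 μ)
    -- Z is variance stationary (with positive variance)
    (hZmean : ∀ t, expv μ (Z t) = expv μ (Z 0))
    (hZvar : ∀ t, covv μ (Z t) (Z t) = covv μ (Z 0) (Z 0))
    (hvarpos : 0 < covv μ (Z 0) (Z 0))
    -- X is covariance stationary with covariance matrix Γ_X = Γ
    (Γ : Matrix (Fin N) (Fin N) ℝ)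
    (hΓ : ∀ t i j, covv μ (fun ω => X t ω i) (fun ω => X t ω j) = Γ i j)
    -- the joint processes (T_{-τ}X, Z) and (X, T_{-τ}Z) are covariance
    -- stationary: the cross covariances depend only on the lag
    (hcross : ∀ (t s t' s' : ℕ) (i : Fin N), (s : ℤ) - (t : ℤ) = (s' : ℤ) - (t' : ℤ) →
      covv μ (fun ω => X t ω i) (Z s) = covv μ (fun ω => X t' ω i) (Z s'))
    -- Γ_X is invertible
    (hΓinv : IsUnit Γ.det) :
    ∀ k : ℕ,
      memCap μ Z X k =
        (fun i => covv μ (Z k) (fun ω => X 0 ω i)) ⬝ᵥ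
            (Γ⁻¹ *ᵥ fun i => covv μ (fun ω => X 0 ω i) (Z k)) /
          covv μ (Z 0) (Z 0) ∧
      foreCap μ Z X (k + 1) =
        (fun i => covv μ (Z 0) (fun ω => X (k + 1) ω i)) ⬝ᵥ
            (Γ⁻¹ *ᵥ fun i => covv μ (fun ω => X (k + 1) ω i) (Z 0)) /
          covv μ (Z 0) (Z 0) :=
  stmt_5_general μ Z X hZ2 hX2 hZvar hvarpos Γ hΓ hΓinv
end

section
/- Let Z be a variance-stationary real-valued input process and let F₂ : D_{N₂} × D → D_{N₂} be a state map satisfying the conditions in the definition of memory and forecasting capacities with respect to Z (ESP on the paths of Z and covariance stationarity of the state and joint processes). Let F₁ : D_{N₁} × D → D_{N₁} be another state map that has at least one solution for each z ∈ D^{ℤ₋}, and let f : ℝ^{N₁} → ℝ^{N₂} be an injective linear system equivariant map between F₁ and F₂. Then the memory and forecasting capacities of F₁ with respect to Z are well-defined and coincide with those of F₂ with respect to Z (MC_τ and FC_τ agree for every lag τ, and hence so do the total capacities MC and FC). -/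
/-!
Equivariance turns `f ∘ X₁` into a solution of `F₂` driven by `Z`, so the echo state property
of `F₂` forces `X₂ = f ∘ X₁`. As `f` is injective, every linear functional on `ℝ^{N₁}` factors
through `f`, hence the linear readouts of `X₁` and of `X₂` are the same random variables and the
least-squares infima defining the capacities coincide.
-/

open Matrix MeasureTheory

theorem map_solution_eq_of_existsUnique {S₁ S₂ I : Type*} {F₁ : S₁ → I → S₁}
    {F₂ : S₂ → I → S₂} {f : S₁ → S₂} {z : ℕ → I}
    (hequiv : ∀ n x, f (F₁ x (z n)) = F₂ (f x) (z n))
    (hESP : ∃! x : ℕ → S₂, ∀ n, x n = F₂ (x (n + 1)) (z n))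
    {x₁ : ℕ → S₁} (hx₁ : ∀ n, x₁ n = F₁ (x₁ (n + 1)) (z n))
    {x₂ : ℕ → S₂} (hx₂ : ∀ n, x₂ n = F₂ (x₂ (n + 1)) (z n)) :
    f ∘ x₁ = x₂ :=
  hESP.unique (fun n => by simp only [Function.comp_apply]; rw [hx₁ n, hequiv]) hx₂

section Readout

variable {K ι κ : Type*} [Field K] [Fintype ι] [Fintype κ] [DecidableEq ι] [DecidableEq κ]

theorem LinearMap.vecMul_toMatrix'_surjective {f : (ι → K) →ₗ[K] (κ → K)}
    (hf : Function.Injective f) : Function.Surjective (LinearMap.toMatrix' f).vecMul := by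
  obtain ⟨g, hg⟩ := f.exists_leftInverse_of_injective (LinearMap.ker_eq_bot.mpr hf)
  refine vecMul_surjective_iff_exists_left_inverse.mpr ⟨LinearMap.toMatrix' g, ?_⟩
  rw [← LinearMap.toMatrix'_comp, hg, LinearMap.toMatrix'_id]

theorem iInf_dotProduct_map_eq {α β γ : Type*} [InfSet γ] {f : (ι → K) →ₗ[K] (κ → K)}
    (hf : Function.Injective f) (x : α → ι → K) (c : (α → K) → β → γ) :
    ⨅ p : (κ → K) × β, c (fun a => p.1 ⬝ᵥ f (x a)) p.2 =
      ⨅ p : (ι → K) × β, c (fun a => p.1 ⬝ᵥ x a) p.2 :=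
  Function.Surjective.iInf_congr (fun p => (p.1 ᵥ* LinearMap.toMatrix' f, p.2))
    ((LinearMap.vecMul_toMatrix'_surjective hf).prodMap Function.surjective_id)
    fun p => by simp only [← LinearMap.toMatrix'_mulVec, dotProduct_mulVec]

end Readout

theorem stmt_6_general {N₁ N₂ : ℕ} (D : Set ℝ)
    (F₁ : (Fin N₁ → ℝ) → ℝ → (Fin N₁ → ℝ)) (F₂ : (Fin N₂ → ℝ) → ℝ → (Fin N₂ → ℝ))
    -- F₂ satisfies the conditions of the capacity definition: the ESP …
    (hESP₂ : ∀ z : ℕ → ℝ, (∀ n, z n ∈ D) →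
      ∃! x : ℕ → (Fin N₂ → ℝ), ∀ n, x n = F₂ (x (n + 1)) (z n))
    {Ω : Type*} [MeasurableSpace Ω] (μ : Measure Ω)
    (Z : ℕ → Ω → ℝ) (hZD : ∀ t ω, Z t ω ∈ D)
    (X₂ : ℕ → Ω → (Fin N₂ → ℝ))
    (hX₂sol : ∀ t ω, X₂ t ω = F₂ (X₂ (t + 1) ω) (Z t ω))
    -- X₁ is such a solution process for the input Z
    (X₁ : ℕ → Ω → (Fin N₁ → ℝ))
    (hX₁sol : ∀ t ω, X₁ t ω = F₁ (X₁ (t + 1) ω) (Z t ω))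
    -- f is an injective linear system equivariant map between F₁ and F₂
    (f : (Fin N₁ → ℝ) →ₗ[ℝ] (Fin N₂ → ℝ)) (hfinj : Function.Injective f)
    (hequiv : ∀ (x : Fin N₁ → ℝ) (z : ℝ), z ∈ D → f (F₁ x z) = F₂ (f x) z) :
    ∀ k : ℕ,
      memCap μ Z X₁ k = memCap μ Z X₂ k ∧
      foreCap μ Z X₁ (k + 1) = foreCap μ Z X₂ (k + 1) := by
  have hX₂ : ∀ t ω, X₂ t ω = f (X₁ t ω) := fun t ω =>
    congrFun (map_solution_eq_of_existsUnique (fun n x => hequiv x _ (hZD n ω))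
      (hESP₂ _ fun n => hZD n ω) (fun n => hX₁sol n ω) fun n => hX₂sol n ω).symm t
  have hreadout : ∀ (g : Ω → ℝ) (t : ℕ),
      ⨅ p : (Fin N₂ → ℝ) × ℝ, ∫ ω, (g ω - p.1 ⬝ᵥ X₂ t ω - p.2) ^ 2 ∂μ =
        ⨅ p : (Fin N₁ → ℝ) × ℝ, ∫ ω, (g ω - p.1 ⬝ᵥ X₁ t ω - p.2) ^ 2 ∂μ := fun g t => by
    simp only [hX₂]
    exact iInf_dotProduct_map_eq hfinj (X₁ t) fun φ a => ∫ ω, (g ω - φ ω - a) ^ 2 ∂μ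
  exact fun k => ⟨by rw [memCap, memCap, hreadout], by rw [foreCap, foreCap, hreadout]⟩

theorem stmt_6 {N₁ N₂ : ℕ} (D : Set ℝ)
    (F₁ : (Fin N₁ → ℝ) → ℝ → (Fin N₁ → ℝ)) (F₂ : (Fin N₂ → ℝ) → ℝ → (Fin N₂ → ℝ))
    -- F₂ satisfies the conditions of the capacity definition: the ESP …
    (hESP₂ : ∀ z : ℕ → ℝ, (∀ n, z n ∈ D) →
      ∃! x : ℕ → (Fin N₂ → ℝ), ∀ n, x n = F₂ (x (n + 1)) (z n))
    {Ω : Type*} [MeasurableSpace Ω] (μ : Measure Ω) [IsProbabilityMeasure μ]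
    (Z : ℕ → Ω → ℝ) (hZD : ∀ t ω, Z t ω ∈ D)
    -- … and the stationarity/integrability conditions
    (hZ2 : ∀ t, MemLp (Z t) 2 μ)
    (hZmean : ∀ t, expv μ (Z t) = expv μ (Z 0))
    (hZvar : ∀ t, covv μ (Z t) (Z t) = covv μ (Z 0) (Z 0))
    (X₂ : ℕ → Ω → (Fin N₂ → ℝ))
    (hX₂sol : ∀ t ω, X₂ t ω = F₂ (X₂ (t + 1) ω) (Z t ω))
    (hX₂2 : ∀ t i, MemLp (fun ω => X₂ t ω i) 2 μ)
    (Γ₂ : Matrix (Fin N₂) (Fin N₂) ℝ)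
    (hΓ₂ : ∀ t i j, covv μ (fun ω => X₂ t ω i) (fun ω => X₂ t ω j) = Γ₂ i j)
    (hcross₂ : ∀ (t s t' s' : ℕ) (i : Fin N₂),
      (s : ℤ) - (t : ℤ) = (s' : ℤ) - (t' : ℤ) →
      covv μ (fun ω => X₂ t ω i) (Z s) = covv μ (fun ω => X₂ t' ω i) (Z s'))
    -- F₁ has at least one solution for each input with values in D;
    -- X₁ is such a solution process for the input Z
    (hsol₁ : ∀ z : ℕ → ℝ, (∀ n, z n ∈ D) →
      ∃ x : ℕ → (Fin N₁ → ℝ), ∀ n, x n = F₁ (x (n + 1)) (z n))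
    (X₁ : ℕ → Ω → (Fin N₁ → ℝ))
    (hX₁sol : ∀ t ω, X₁ t ω = F₁ (X₁ (t + 1) ω) (Z t ω))
    (hX₁2 : ∀ t i, MemLp (fun ω => X₁ t ω i) 2 μ)
    -- f is an injective linear system equivariant map between F₁ and F₂
    (f : (Fin N₁ → ℝ) →ₗ[ℝ] (Fin N₂ → ℝ)) (hfinj : Function.Injective f)
    (hequiv : ∀ (x : Fin N₁ → ℝ) (z : ℝ), z ∈ D → f (F₁ x z) = F₂ (f x) z) :
    ∀ k : ℕ,
      memCap μ Z X₁ k = memCap μ Z X₂ k ∧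
      foreCap μ Z X₁ (k + 1) = foreCap μ Z X₂ (k + 1) :=
  stmt_6_general D F₁ F₂ hESP₂ μ Z hZD X₂ hX₂sol X₁ hX₁sol f hfinj hequiv
end

section
/- Let A ∈ M_N(ℝ) with σ_max(A) < 1 be diagonalizable, with eigenvalues λ₁, …, λ_N and eigenvector basis {v₁, …, v_N}, and let C ∈ ℝ^N be written as C = ∑_{i=1}^N c_i v_i with all coefficients c_i ≠ 0. Then the matrix B := ∑_{j=0}^∞ A^j C C⊤ (A^j)⊤ (which for a white noise input Z with variance γ(0) equals Γ_X/γ(0), where Γ_X = Cov(X_t, X_t) is the covariance matrix of the state process X_t = ∑_{j≥0} A^j C Z_{t−j}) is non-singular if and only if the eigenvalues λ₁, …, λ_N are pairwise distinct. -/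
/-!
With `g k = A ^ k *ᵥ C`, the matrix `B = ∑ₖ g k (g k)ᵀ` satisfies `xᵀ B x = ∑ₖ (x ⬝ g k)²`, so
`B x = 0` exactly when `x` is orthogonal to every `g k`. Expanding `C` in the eigenbasis gives
`x ⬝ g k = ∑ₘ yₘ λₘ ^ k` with `yₘ = cₘ (x ⬝ vₘ)`, an invertible change of variables because `v` is
a basis and no `cₘ` vanishes. By Vandermonde, these power sums vanish for all `k` only for `y = 0`
exactly when the `λₘ` are distinct; if `λₘ = λₙ` with `m ≠ n`, then `y = eₘ - eₙ` is a nonzero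
solution. The contraction hypothesis gives `|λₘ| < 1`, which makes the series converge.
-/

open Matrix

section OuterSeries

variable {n : Type*} [Fintype n] {g : ℕ → n → ℝ}

theorem tsum_outer_mulVec_eq_zero_iff (hg : ∀ i j, Summable fun k => g k i * g k j)
    (x : n → ℝ) :
    (of fun i j => ∑' k, g k i * g k j) *ᵥ x = 0 ↔ ∀ k, x ⬝ᵥ g k = 0 := by
  set M : Matrix n n ℝ := of fun i j => ∑' k, g k i * g k j
  have hrow : ∀ i, HasSum (fun k => (x ⬝ᵥ g k) * g k i) ((M *ᵥ x) i) := by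
    intro i
    have e : ∀ k, (x ⬝ᵥ g k) * g k i = ∑ j, g k i * g k j * x j := fun k => by
      simp only [dotProduct, Finset.sum_mul]
      exact Finset.sum_congr rfl fun j _ => by ring
    simp only [e]
    exact hasSum_sum fun j _ => (hg i j).hasSum.mul_right (x j)
  have hquad : HasSum (fun k => (x ⬝ᵥ g k) ^ 2) (x ⬝ᵥ (M *ᵥ x)) := by
    have e : ∀ k, (x ⬝ᵥ g k) ^ 2 = ∑ i, x i * ((x ⬝ᵥ g k) * g k i) := fun k => by
      rw [sq]
      simp only [dotProduct, Finset.sum_mul, Finset.mul_sum]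
      exact Finset.sum_congr rfl fun i _ => Finset.sum_congr rfl fun j _ => by ring
    simp only [e]
    exact hasSum_sum fun i _ => (hrow i).mul_left (x i)
  constructor
  · intro hMx k
    rw [hMx, dotProduct_zero, hasSum_zero_iff_of_nonneg fun k => sq_nonneg _] at hquad
    exact pow_eq_zero_iff two_ne_zero |>.1 (congrFun hquad k)
  · intro hx
    ext i
    exact (hrow i).unique (by simp [hx, hasSum_zero])

theorem isUnit_det_tsum_outer_iff [DecidableEq n] (hg : ∀ i j, Summable fun k => g k i * g k j) :
    IsUnit (of fun i j => ∑' k, g k i * g k j).det ↔ ∀ x, (∀ k, x ⬝ᵥ g k = 0) → x = 0 := by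
  rw [isUnit_iff_ne_zero, Ne, ← exists_mulVec_eq_zero_iff]
  simp only [tsum_outer_mulVec_eq_zero_iff hg, ne_eq, not_exists, not_and, not_imp_not]

end OuterSeries

theorem forall_pow_sum_mul_pow_eq_zero_iff_injective {R : Type*} [CommRing R] [IsDomain R]
    {n : ℕ} {f : Fin n → R} :
    (∀ y : Fin n → R, (∀ k : ℕ, ∑ j, y j * f j ^ k = 0) → y = 0) ↔ Function.Injective f := by
  refine ⟨fun h i j hij => ?_,
    fun hf y hy => eq_zero_of_forall_pow_sum_mul_pow_eq_zero hf fun k => hy k⟩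
  by_contra hne
  have hy := h (Pi.single i 1 - Pi.single j 1) fun k => by
    simp [sub_mul, Finset.sum_sub_distrib, Pi.single_apply, hij]
  simpa [hne] using congrFun hy i

theorem forall_vecMul_imp_eq_zero_iff {n K : Type*} [Fintype n] [DecidableEq n] [Field K]
    {P : Matrix n n K} (hP : IsUnit P) (p : (n → K) → Prop) :
    (∀ x, p (x ᵥ* P) → x = 0) ↔ ∀ y, p y → y = 0 := by
  refine Iff.symm <| (vecMul_surjective_iff_isUnit.2 hP).forall.trans <|
    forall_congr' fun x => imp_congr_right fun _ => ?_
  exact (vecMul_injective_iff_isUnit.2 hP).eq_iff' (zero_vecMul P)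

section BasisCoordinates

variable {n K : Type*} [Fintype n] [DecidableEq n] [CommRing K] (v : Module.Basis n K (n → K))

theorem vecMul_toMatrix_mul_diagonal_apply (c x : n → K) (m : n) :
    (x ᵥ* ((Pi.basisFun K n).toMatrix v * diagonal c)) m = c m * (x ⬝ᵥ v m) := by
  rw [← vecMul_vecMul, vecMul_diagonal, mul_comm]
  simp [vecMul, dotProduct, Module.Basis.toMatrix_apply]

theorem isUnit_toMatrix_mul_diagonal {c : n → K} (hc : ∀ m, IsUnit (c m)) :
    IsUnit ((Pi.basisFun K n).toMatrix v * diagonal c) := by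
  have := (Pi.basisFun K n).invertibleToMatrix v
  exact (isUnit_of_invertible _).mul (isUnit_diagonal.2 (Pi.isUnit_iff.2 hc))

end BasisCoordinates

theorem pow_mulVec_eq_pow_smul {n R : Type*} [Fintype n] [DecidableEq n] [CommSemiring R]
    {A : Matrix n n R} {u : n → R} {μ : R} (h : A *ᵥ u = μ • u) (k : ℕ) :
    A ^ k *ᵥ u = μ ^ k • u := by
  induction k with
  | zero => simp
  | succ k ih => rw [pow_succ', ← mulVec_mulVec, ih, mulVec_smul, h, smul_smul, pow_succ]

theorem abs_le_of_mulVec_eq_smul {n : Type*} [Fintype n] {A : Matrix n n ℝ} {r : ℝ}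
    (hA : ∀ x : n → ℝ, √(∑ i, (A *ᵥ x) i ^ 2) ≤ r * √(∑ i, x i ^ 2))
    {u : n → ℝ} (hu : u ≠ 0) {μ : ℝ} (h : A *ᵥ u = μ • u) : |μ| ≤ r := by
  have hpos : 0 < √(∑ i, u i ^ 2) := by
    obtain ⟨i, hi⟩ := Function.ne_iff.1 hu
    exact Real.sqrt_pos.2 <| Finset.sum_pos' (fun i _ => sq_nonneg _)
      ⟨i, Finset.mem_univ _, pow_two_pos_of_ne_zero hi⟩
  have hsmul : √(∑ i, (μ • u) i ^ 2) = |μ| * √(∑ i, u i ^ 2) := by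
    simp only [Pi.smul_apply, smul_eq_mul, mul_pow, ← Finset.mul_sum,
      Real.sqrt_mul' _ (Finset.sum_nonneg fun i _ => sq_nonneg (u i)), Real.sqrt_sq_eq_abs]
  have hle := hA u
  rw [h, hsmul] at hle
  exact le_of_mul_le_mul_right hle hpos

theorem summable_sum_mul_pow_mul_sum_mul_pow {ι : Type*} [Fintype ι] {lam : ι → ℝ}
    (hlam : ∀ m, |lam m| < 1) (a b : ι → ℝ) :
    Summable fun k : ℕ => (∑ m, a m * lam m ^ k) * (∑ m, b m * lam m ^ k) := by
  simp only [Finset.sum_mul_sum]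
  refine summable_sum fun m _ => summable_sum fun l _ => ?_
  have : |lam m * lam l| < 1 := by
    rw [abs_mul]; exact mul_lt_one_of_nonneg_of_lt_one_left (abs_nonneg _) (hlam m) (hlam l).le
  simpa [mul_pow, mul_mul_mul_comm] using
    (summable_geometric_of_abs_lt_one this).mul_left (a m * b l)

theorem stmt_12 {N : ℕ} (A : Matrix (Fin N) (Fin N) ℝ)
    (hA : ∃ c : ℝ, 0 ≤ c ∧ c < 1 ∧ ∀ x : Fin N → ℝ,
      Real.sqrt (∑ i, (A *ᵥ x) i ^ 2) ≤ c * Real.sqrt (∑ i, x i ^ 2))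
    (lam : Fin N → ℝ) (v : Module.Basis (Fin N) ℝ (Fin N → ℝ))
    (heig : ∀ i, A *ᵥ v i = lam i • v i)
    (C : Fin N → ℝ) (c : Fin N → ℝ)
    (hC : C = ∑ i, c i • v i) (hc : ∀ i, c i ≠ 0) :
    IsUnit (Matrix.of fun i j : Fin N =>
        ∑' k : ℕ, ((A ^ k) *ᵥ C) i * ((A ^ k) *ᵥ C) j).det ↔
      Function.Injective lam := by
  obtain ⟨r, -, hr1, hrA⟩ := hA
  have hlam : ∀ m, |lam m| < 1 := fun m =>
    (abs_le_of_mulVec_eq_smul hrA (v.ne_zero m) (heig m)).trans_lt hr1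
  have hAC : ∀ k, A ^ k *ᵥ C = ∑ m, (c m * lam m ^ k) • v m := by
    intro k
    simp only [hC, mulVec_sum, mulVec_smul, pow_mulVec_eq_pow_smul (heig _), smul_smul]
  have hsum : ∀ i j, Summable fun k => (A ^ k *ᵥ C) i * (A ^ k *ᵥ C) j := fun i j => by
    simpa only [hAC, Finset.sum_apply, Pi.smul_apply, smul_eq_mul, mul_right_comm] using
      summable_sum_mul_pow_mul_sum_mul_pow hlam (fun m => c m * v m i) (fun m => c m * v m j)
  set P := (Pi.basisFun ℝ (Fin N)).toMatrix v * diagonal c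
  have hdot : ∀ k x, x ⬝ᵥ (A ^ k *ᵥ C) = ∑ m, (x ᵥ* P) m * lam m ^ k := by
    intro k x
    simp only [hAC, dotProduct_sum, dotProduct_smul, smul_eq_mul, P,
      vecMul_toMatrix_mul_diagonal_apply]
    exact Finset.sum_congr rfl fun m _ => by ring
  rw [isUnit_det_tsum_outer_iff (g := fun k => A ^ k *ᵥ C) hsum,
    ← forall_pow_sum_mul_pow_eq_zero_iff_injective]
  simp only [hdot]
  exact forall_vecMul_imp_eq_zero_iff (isUnit_toMatrix_mul_diagonal v fun m => (hc m).isUnit)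
    fun y => ∀ k : ℕ, ∑ m, y m * lam m ^ k = 0
end

section
/- Let A ∈ M_N(ℝ) with σ_max(A) < 1, C ∈ ℝ^N, X := span{C, AC, …, A^{N−1}C} with r := dim X = rank R(A, C), and let ℝ^N = X ⊕ V be a direct sum decomposition with injection i_X and projection π_X. Define the reduced linear system on X by Ā := π_X A i_X and C̄ := π_X(C). Then the controllability matrices have equal rank: rank R(Ā, C̄) = rank R(A, C) = r (in particular the reduced pair (Ā, C̄) is controllable on X). Moreover, if Ā is diagonalizable with non-zero eigenvalues and the input Z is a strictly stationary white noise, then the covariance matrix Γ_X̄ := Cov(X̄_t, X̄_t) of the state process X̄ of the reduced system is invertible. -/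
open Matrix MeasureTheory

/-- The subspace X = span{C, AC, …, A^{N-1}C} ⊆ ℝ^N. -/
noncomputable def ctrlSpan {N : ℕ} (A : Matrix (Fin N) (Fin N) ℝ) (C : Fin N → ℝ) :
    Submodule ℝ (Fin N → ℝ) :=
  Submodule.span ℝ (Set.range fun j : Fin N => (A ^ (j : ℕ)) *ᵥ C)

/-- The controllability matrix R(A,C) = (C | AC | ⋯ | A^{N-1}C). -/
noncomputable def ctrlMat {N : ℕ} (A : Matrix (Fin N) (Fin N) ℝ) (C : Fin N → ℝ) :
    Matrix (Fin N) (Fin N) ℝ :=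
  Matrix.of fun i j : Fin N => ((A ^ (j : ℕ)) *ᵥ C) i

/-- The reduced connectivity map Ā = π_X ∘ A ∘ i_X on X = span{C, AC, …}. -/
noncomputable def redA {N : ℕ} (A : Matrix (Fin N) (Fin N) ℝ) (C : Fin N → ℝ)
    (V : Submodule ℝ (Fin N → ℝ)) (h : IsCompl (ctrlSpan A C) V) :
    ctrlSpan A C →ₗ[ℝ] ctrlSpan A C :=
  Submodule.linearProjOfIsCompl (ctrlSpan A C) V h ∘ₗ
    (A.mulVecLin ∘ₗ (ctrlSpan A C).subtype)

/-- The reduced input vector C̄ = π_X(C). -/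
noncomputable def redC {N : ℕ} (A : Matrix (Fin N) (Fin N) ℝ) (C : Fin N → ℝ)
    (V : Submodule ℝ (Fin N → ℝ)) (h : IsCompl (ctrlSpan A C) V) : ctrlSpan A C :=
  Submodule.linearProjOfIsCompl (ctrlSpan A C) V h C

/-! X is the cyclic subspace of A generated by C, hence A-invariant, so Ā is the restriction of A
to X and Ā^k C̄ = A^k C. The Krylov spaces span{C, …, A^{k-1}C} grow strictly until they
stabilise, and once stable they are A-invariant; hence already the first r = dim X iterates span
X, which gives rank R(Ā, C̄) = r = rank R(A, C).

In an eigenbasis of Ā the coordinates of Ā^k C̄ are λ_i^k c_i, square-summable because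
|λ_i| ≤ σ_max(A) < 1. The quadratic form of Γ_X̄ is x ↦ γ(0) ∑_k ⟨x, Ā^k C̄⟩², which vanishes
only if x is orthogonal to every Ā^k C̄, i.e. to all of X. -/

open Module Submodule

namespace Module.End

variable {K M : Type*} [Field K] [AddCommGroup M] [Module K M] (f : Module.End K M) (v : M)

noncomputable def krylov (k : ℕ) : Submodule K M :=
  span K (Set.range fun j : Fin k => (f ^ (j : ℕ)) v)

noncomputable def cyclicSpan : Submodule K M :=
  span K (Set.range fun k : ℕ => (f ^ k) v)

lemma krylov_le_krylov_succ (k : ℕ) : f.krylov v k ≤ f.krylov v (k + 1) :=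
  span_mono <| Set.range_subset_iff.mpr fun j => ⟨j.castSucc, rfl⟩

lemma krylov_le_cyclicSpan (k : ℕ) : f.krylov v k ≤ f.cyclicSpan v :=
  span_mono <| Set.range_subset_iff.mpr fun j => ⟨j, rfl⟩

lemma apply_mem_cyclicSpan : ∀ x ∈ f.cyclicSpan v, f x ∈ f.cyclicSpan v := by
  suffices f.cyclicSpan v ≤ (f.cyclicSpan v).comap f from this
  refine span_le.mpr <| Set.range_subset_iff.mpr fun k => subset_span ⟨k + 1, ?_⟩
  simp only [pow_succ', Module.End.mul_apply]

lemma cyclicSpan_le_krylov_of_krylov_succ_le {k : ℕ} (h : f.krylov v (k + 1) ≤ f.krylov v k) :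
    f.cyclicSpan v ≤ f.krylov v k := by
  have hinv : f.krylov v k ≤ (f.krylov v k).comap f := by
    refine span_le.mpr <| Set.range_subset_iff.mpr fun j => h <| subset_span ⟨⟨j + 1, by omega⟩, ?_⟩
    simp only [pow_succ', Module.End.mul_apply]
  refine span_le.mpr <| Set.range_subset_iff.mpr fun m => ?_
  induction m with
  | zero => exact h <| subset_span ⟨0, by simp⟩
  | succ m ih => rw [pow_succ', Module.End.mul_apply]; exact hinv ih

variable [FiniteDimensional K M]

lemma cyclicSpan_le_krylov_or_le_finrank (k : ℕ) :
    f.cyclicSpan v ≤ f.krylov v k ∨ k ≤ finrank K (f.krylov v k) := by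
  induction k with
  | zero => exact Or.inr (Nat.zero_le _)
  | succ k ih =>
    rcases ih with hle | hk
    · exact Or.inl (hle.trans (f.krylov_le_krylov_succ v k))
    by_cases hstab : f.krylov v (k + 1) ≤ f.krylov v k
    · exact Or.inl ((f.cyclicSpan_le_krylov_of_krylov_succ_le v hstab).trans
        (f.krylov_le_krylov_succ v k))
    · have := finrank_lt_finrank_of_lt ((f.krylov_le_krylov_succ v k).lt_of_not_ge hstab)
      exact Or.inr (by omega)

lemma krylov_eq_cyclicSpan {k : ℕ} (hk : finrank K (f.cyclicSpan v) ≤ k) :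
    f.krylov v k = f.cyclicSpan v := by
  rcases f.cyclicSpan_le_krylov_or_le_finrank v k with hle | hk'
  · exact (f.krylov_le_cyclicSpan v k).antisymm hle
  · exact eq_of_le_of_finrank_le (f.krylov_le_cyclicSpan v k) (hk.trans hk')

end Module.End

lemma abs_le_of_sqrt_sum_sq_smul_le {ι : Type*} [Fintype ι] {x : ι → ℝ} (hx : x ≠ 0) {a c : ℝ}
    (h : √(∑ i, (a • x) i ^ 2) ≤ c * √(∑ i, x i ^ 2)) : |a| ≤ c := by
  have hpos : 0 < √(∑ i, x i ^ 2) := by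
    obtain ⟨i, hi⟩ := Function.ne_iff.mp hx
    exact Real.sqrt_pos.mpr <|
      Finset.sum_pos' (fun j _ => sq_nonneg _) ⟨i, Finset.mem_univ i, sq_pos_of_ne_zero hi⟩
  have hsmul : √(∑ i, (a • x) i ^ 2) = |a| * √(∑ i, x i ^ 2) := by
    simp only [Pi.smul_apply, smul_eq_mul, mul_pow, ← Finset.mul_sum,
      Real.sqrt_mul (sq_nonneg a), Real.sqrt_sq_eq_abs]
  exact le_of_mul_le_mul_right (hsmul ▸ h) hpos

namespace Module.Basis

variable {ι K M : Type*} [Fintype ι] [Field K] [AddCommGroup M] [Module K M] (b : Basis ι K M)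
  {g : Module.End K M} {lam : ι → K}

lemma repr_apply_of_eigen (h : ∀ i, g (b i) = lam i • b i) (w : M) (i : ι) :
    b.repr (g w) i = lam i * b.repr w i := by
  classical
  have hdiag : LinearMap.toMatrix b b g = Matrix.diagonal lam := by
    ext i j
    rw [LinearMap.toMatrix_apply, h, map_smul, b.repr_self, Matrix.diagonal_apply]
    by_cases hij : i = j <;> simp [hij]
  have := congrFun (LinearMap.toMatrix_mulVec_repr b b g w) i
  rwa [hdiag, Matrix.mulVec_diagonal, eq_comm] at this

lemma repr_pow_apply_of_eigen (h : ∀ i, g (b i) = lam i • b i) (k : ℕ) (w : M) (i : ι) :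
    b.repr ((g ^ k) w) i = lam i ^ k * b.repr w i := by
  induction k with
  | zero => simp
  | succ k ih =>
    rw [pow_succ', Module.End.mul_apply, b.repr_apply_of_eigen h, ih, pow_succ', mul_assoc]

end Module.Basis

open Matrix in
lemma Matrix.posDef_of_forall_summable_of_span_eq_top {ι : Type*} [Fintype ι] (u : ℕ → ι → ℝ)
    (hsum : ∀ i j, Summable fun k => u k i * u k j) (hspan : span ℝ (Set.range u) = ⊤) :
    (of fun i j => ∑' k, u k i * u k j).PosDef := by
  refine .of_dotProduct_mulVec_pos (IsHermitian.ext fun i j => ?_) fun x hx => ?_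
  · simp [mul_comm]
  rw [star_trivial]
  have hterm : ∀ k, (x ⬝ᵥ u k) ^ 2 = ∑ i, ∑ j, x i * x j * (u k i * u k j) := fun k => by
    simp only [dotProduct, sq, Finset.sum_mul_sum]
    exact Finset.sum_congr rfl fun i _ => Finset.sum_congr rfl fun j _ => by ring
  have hquad : HasSum (fun k => (x ⬝ᵥ u k) ^ 2)
      (x ⬝ᵥ (of (fun i j => ∑' k, u k i * u k j) *ᵥ x)) := by
    have hval : x ⬝ᵥ (of (fun i j => ∑' k, u k i * u k j) *ᵥ x)
        = ∑ i, ∑ j, x i * x j * ∑' k, u k i * u k j := by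
      simp only [dotProduct, mulVec, of_apply, Finset.mul_sum]
      exact Finset.sum_congr rfl fun i _ => Finset.sum_congr rfl fun j _ => by ring
    simp only [hterm, hval]
    exact hasSum_sum fun i _ => hasSum_sum fun j _ => (hsum i j).hasSum.mul_left (x i * x j)
  refine (hquad.nonneg fun k => sq_nonneg _).lt_of_ne fun h0 => hx ?_
  have hzero := (hasSum_zero_iff_of_nonneg fun k => sq_nonneg (x ⬝ᵥ u k)).mp (h0 ▸ hquad)
  have horth : ∀ k, x ⬝ᵥ u k = 0 := fun k => (pow_eq_zero_iff two_ne_zero).mp (congrFun hzero k)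
  have hker : span ℝ (Set.range u) ≤ LinearMap.ker (dotProductBilin ℝ ℝ x) :=
    span_le.mpr <| Set.range_subset_iff.mpr horth
  rw [hspan, top_le_iff, LinearMap.ker_eq_top] at hker
  exact dotProduct_self_eq_zero.mp (LinearMap.congr_fun hker x)

section ReducedSystem

open Module.End

variable {N : ℕ} (A : Matrix (Fin N) (Fin N) ℝ) (C : Fin N → ℝ)

lemma ctrlSpan_eq_krylov : ctrlSpan A C = krylov (toLin' A) C N := by
  simp only [ctrlSpan, krylov, ← toLin'_pow, toLin'_apply]

lemma ctrlSpan_eq_cyclicSpan : ctrlSpan A C = cyclicSpan (toLin' A) C := by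
  rw [ctrlSpan_eq_krylov]
  refine krylov_eq_cyclicSpan _ _ ((finrank_le _).trans_eq ?_)
  simp

lemma krylov_finrank_ctrlSpan_eq :
    krylov (toLin' A) C (finrank ℝ (ctrlSpan A C)) = ctrlSpan A C := by
  rw [ctrlSpan_eq_cyclicSpan]
  exact krylov_eq_cyclicSpan _ _ le_rfl

lemma rank_ctrlMat : (ctrlMat A C).rank = finrank ℝ (ctrlSpan A C) := by
  rw [rank_eq_finrank_span_cols]
  rfl

lemma toLin'_apply_mem_ctrlSpan : ∀ x ∈ ctrlSpan A C, toLin' A x ∈ ctrlSpan A C := by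
  rw [ctrlSpan_eq_cyclicSpan]
  exact apply_mem_cyclicSpan _ _

lemma self_mem_ctrlSpan : C ∈ ctrlSpan A C := by
  rw [ctrlSpan_eq_cyclicSpan]
  exact subset_span ⟨0, by simp⟩

variable (V : Submodule ℝ (Fin N → ℝ)) (h : IsCompl (ctrlSpan A C) V)

lemma redA_eq_restrict : redA A C V h = (toLin' A).restrict (toLin'_apply_mem_ctrlSpan A C) := by
  ext x : 1
  exact projectionOnto_apply_of_mem_left h _

lemma coe_redA_apply (x : ctrlSpan A C) : (redA A C V h x : Fin N → ℝ) = A *ᵥ x := by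
  rw [redA_eq_restrict]
  rfl

lemma redC_eq_mk : redC A C V h = ⟨C, self_mem_ctrlSpan A C⟩ :=
  projectionOnto_apply_of_mem_left h _

lemma coe_redA_pow_redC (k : ℕ) :
    ((redA A C V h ^ k) (redC A C V h) : Fin N → ℝ) = (A ^ k) *ᵥ C := by
  rw [redA_eq_restrict, pow_restrict, redC_eq_mk]
  simp [← toLin'_pow]

lemma span_redA_pow_redC_eq_top :
    span ℝ (Set.range fun j : Fin (finrank ℝ (ctrlSpan A C)) =>
      (redA A C V h ^ (j : ℕ)) (redC A C V h)) = ⊤ := by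
  apply map_injective_of_injective (ctrlSpan A C).injective_subtype
  rw [map_span, map_subtype_top, ← Set.range_comp]
  conv_rhs => rw [← krylov_finrank_ctrlSpan_eq]
  simp only [krylov, Function.comp_def, subtype_apply, coe_redA_pow_redC, ← toLin'_pow,
    toLin'_apply]

lemma abs_lt_one_of_redA_apply_eq_smul {c : ℝ} (hc : c < 1)
    (hcon : ∀ x : Fin N → ℝ, √(∑ i, (A *ᵥ x) i ^ 2) ≤ c * √(∑ i, x i ^ 2))
    {x : ctrlSpan A C} (hx : x ≠ 0) {a : ℝ} (hax : redA A C V h x = a • x) : |a| < 1 := by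
  have hAx : A *ᵥ (x : Fin N → ℝ) = a • (x : Fin N → ℝ) := by
    rw [← coe_redA_apply A C V h, hax, coe_smul]
  exact (abs_le_of_sqrt_sum_sq_smul_le (coe_eq_zero.not.mpr hx) (hAx ▸ hcon x)).trans_lt hc

end ReducedSystem

theorem stmt_18_general {N : ℕ} (A : Matrix (Fin N) (Fin N) ℝ) (C : Fin N → ℝ)
    (hA : ∃ c : ℝ, 0 ≤ c ∧ c < 1 ∧ ∀ x : Fin N → ℝ,
      Real.sqrt (∑ i, (A *ᵥ x) i ^ 2) ≤ c * Real.sqrt (∑ i, x i ^ 2))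
    (V : Submodule ℝ (Fin N → ℝ)) (hcompl : IsCompl (ctrlSpan A C) V)
    (γ0 : ℝ) (hγ0 : 0 < γ0) :
    -- rank R(Ā, C̄) = rank R(A, C) = r := dim X
    (Module.finrank ℝ
        (Submodule.span ℝ (Set.range
          fun j : Fin (Module.finrank ℝ (ctrlSpan A C)) =>
            ((redA A C V hcompl) ^ (j : ℕ)) (redC A C V hcompl))) =
      (ctrlMat A C).rank ∧
      (ctrlMat A C).rank = Module.finrank ℝ (ctrlSpan A C)) ∧
    -- if Ā is diagonalizable with non-zero eigenvalues, Γ_X̄ is invertible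
    (∀ (lam : Fin (Module.finrank ℝ (ctrlSpan A C)) → ℝ)
        (b : Module.Basis (Fin (Module.finrank ℝ (ctrlSpan A C))) ℝ (ctrlSpan A C)),
      (∀ i, (redA A C V hcompl) (b i) = lam i • b i) → (∀ i, lam i ≠ 0) →
      IsUnit (Matrix.of fun i j : Fin (Module.finrank ℝ (ctrlSpan A C)) =>
          γ0 * ∑' k : ℕ,
            b.repr (((redA A C V hcompl) ^ k) (redC A C V hcompl)) i *
              b.repr (((redA A C V hcompl) ^ k) (redC A C V hcompl)) j).det) := by
  refine ⟨⟨?_, rank_ctrlMat A C⟩, fun lam b heig _ => ?_⟩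
  · rw [span_redA_pow_redC_eq_top, finrank_top, rank_ctrlMat]
  set w : ℕ → ctrlSpan A C := fun k => (redA A C V hcompl ^ k) (redC A C V hcompl)
  obtain ⟨c, -, hc, hcon⟩ := hA
  have hlam : ∀ i, |lam i| < 1 := fun i =>
    abs_lt_one_of_redA_apply_eq_smul A C V hcompl hc hcon (b.ne_zero i) (heig i)
  have hsum : ∀ i j, Summable fun k => b.repr (w k) i * b.repr (w k) j := fun i j => by
    have hlt : ‖lam i * lam j‖ < 1 := by
      rw [norm_mul]
      exact mul_lt_one_of_nonneg_of_lt_one_left (norm_nonneg _) (hlam i) (hlam j).le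
    simpa [w, b.repr_pow_apply_of_eigen heig, mul_pow, mul_mul_mul_comm] using
      (summable_geometric_of_norm_lt_one hlt).mul_right
        (b.repr (redC A C V hcompl) i * b.repr (redC A C V hcompl) j)
  have hspan : span ℝ (Set.range w) = ⊤ :=
    eq_top_iff.mpr <| (span_redA_pow_redC_eq_top A C V hcompl).ge.trans <|
      span_mono <| Set.range_subset_iff.mpr fun j => ⟨j, rfl⟩
  have hspan_repr : span ℝ (Set.range fun k => b.equivFun (w k)) = ⊤ := by
    rw [Set.range_comp' b.equivFun w, span_image_linearEquiv, hspan, Submodule.map_top,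
      LinearEquiv.range]
  rw [← isUnit_iff_isUnit_det]
  exact ((posDef_of_forall_summable_of_span_eq_top _ hsum hspan_repr).smul hγ0).isUnit

theorem stmt_18 {N : ℕ} (A : Matrix (Fin N) (Fin N) ℝ) (C : Fin N → ℝ)
    (hA : ∃ c : ℝ, 0 ≤ c ∧ c < 1 ∧ ∀ x : Fin N → ℝ,
      Real.sqrt (∑ i, (A *ᵥ x) i ^ 2) ≤ c * Real.sqrt (∑ i, x i ^ 2))
    (V : Submodule ℝ (Fin N → ℝ)) (hcompl : IsCompl (ctrlSpan A C) V)
    -- a strictly stationary white noise input Z with variance γ0 > 0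
    {Ω : Type*} [MeasurableSpace Ω] (μ : Measure Ω) [IsProbabilityMeasure μ]
    (Z : ℤ → Ω → ℝ) (hZ2 : ∀ t, MemLp (Z t) 2 μ)
    (hstat : ∀ τ : ℤ, Measure.map (fun ω => fun t : ℤ => Z (t + τ) ω) μ =
      Measure.map (fun ω => fun t : ℤ => Z t ω) μ)
    (hmean : ∀ t, expv μ (Z t) = 0)
    (hwn : ∀ s t : ℤ, s ≠ t → covv μ (Z s) (Z t) = 0)
    (γ0 : ℝ) (hvar : ∀ t, covv μ (Z t) (Z t) = γ0) (hγ0 : 0 < γ0) :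
    -- rank R(Ā, C̄) = rank R(A, C) = r := dim X
    (Module.finrank ℝ
        (Submodule.span ℝ (Set.range
          fun j : Fin (Module.finrank ℝ (ctrlSpan A C)) =>
            ((redA A C V hcompl) ^ (j : ℕ)) (redC A C V hcompl))) =
      (ctrlMat A C).rank ∧
      (ctrlMat A C).rank = Module.finrank ℝ (ctrlSpan A C)) ∧
    -- if Ā is diagonalizable with non-zero eigenvalues, Γ_X̄ is invertible
    (∀ (lam : Fin (Module.finrank ℝ (ctrlSpan A C)) → ℝ)
        (b : Module.Basis (Fin (Module.finrank ℝ (ctrlSpan A C))) ℝ (ctrlSpan A C)),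
      (∀ i, (redA A C V hcompl) (b i) = lam i • b i) → (∀ i, lam i ≠ 0) →
      IsUnit (Matrix.of fun i j : Fin (Module.finrank ℝ (ctrlSpan A C)) =>
          γ0 * ∑' k : ℕ,
            b.repr (((redA A C V hcompl) ^ k) (redC A C V hcompl)) i *
              b.repr (((redA A C V hcompl) ^ k) (redC A C V hcompl)) j).det) :=
  stmt_18_general A C hA V hcompl γ0 hγ0
end
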